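/- Let k be a field of characteristic zero and A = k[x_1,…,x_n]/J an Artinian Gorenstein graded quotient by a homogeneous ideal J ⊆ (x_1,…,x_n), with socle degree η. Let ρ : A → k be a linear form vanishing on all graded components A_j for j < η and nonzero on A_η. Then the homogeneous polynomial S(x_1,…,x_n) = ρ((x_1 e_1 + ⋯ + x_n e_n)^η), where e_i is the class of x_i, satisfies Ann(S) = J. In particular, every Artinian Gorenstein graded quotient admits a homogeneous Macaulay inverse system of degree equal to its socle degree. -/

import Mathlib

/-!
Write `e i` for the class of `X i` in `A = k[X] ⧸ J` and `L = ∑ i, e i • X i ∈ A[X]`, so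
that `S = ρ (L ^ η)`. A form `f` of degree `d` acts by
`f(∂) L ^ η = η! / (η - d)! • f(e) L ^ (η - d)`, and by the multinomial theorem the
coefficient of `X ^ m` in `f(∂) S` is a nonzero integer multiple (characteristic zero) of
`ρ (f_{η - |m|}(e) e ^ m)`. So `f(∂) S = 0` says that `ρ (f_j(e) · A_{η - j}) = 0` for every
homogeneous component `f_j`; as `ρ` kills the lower degrees and `A` vanishes above degree `η`,
this is `ρ (f_j(e) · A) = 0`. Finally the pairing `(a, b) ↦ ρ (a b)` is nondegenerate: an
element `a` with `ρ (a A) = 0` generates an ideal which, if nonzero, meets the one-dimensional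
socle `A_η`, on which `ρ` does not vanish. Hence every `f_j` lies in `J`.
-/

open MvPolynomial

set_option synthInstance.maxHeartbeats 400000
set_option maxHeartbeats 1000000

/-- The iterated partial derivative operator `∂^d = ∏ᵢ (∂/∂xᵢ)^{dᵢ}` attached to a
multi-index `d`. -/
noncomputable def diffMonomial {n : ℕ} {k : Type*} [CommSemiring k] (d : Fin n →₀ ℕ) :
    Module.End k (MvPolynomial (Fin n) k) :=
  (List.ofFn fun i : Fin n =>
    ((pderiv i).toLinearMap : Module.End k (MvPolynomial (Fin n) k)) ^ (d i)).prod

/-- The action of a polynomial `f` on a polynomial `g` by substituting partial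
differentiation operators for the variables: `f(∂/∂x_1, …, ∂/∂x_n)(g)`. -/
noncomputable def diffOp {n : ℕ} {k : Type*} [CommSemiring k]
    (f g : MvPolynomial (Fin n) k) : MvPolynomial (Fin n) k :=
  ∑ d ∈ f.support, f.coeff d • diffMonomial d g

/-- Apply a linear functional `ρ : A → k` coefficientwise to a polynomial with
coefficients in `A`, producing a polynomial with coefficients in `k`. -/
noncomputable def coeffMap {n : ℕ} {k A : Type*} [CommSemiring k] [CommSemiring A]
    (ρ : A → k) (p : MvPolynomial (Fin n) A) : MvPolynomial (Fin n) k :=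
  ∑ d ∈ p.support, monomial d (ρ (p.coeff d))

/-- The socle `Soc(A) = { x ∈ M : x M = 0 }` of an algebra `A` with respect to an
ideal `M` (to be taken as the maximal ideal), as a `k`-submodule of `A`. -/
noncomputable def socle (k : Type*) {A : Type*} [Field k] [CommRing A] [Algebra k A]
    (M : Ideal A) : Submodule k A :=
  (Submodule.restrictScalars k M) ⊓ ⨅ y ∈ M, LinearMap.ker (LinearMap.mulLeft k y)

section CoeffMap

variable {n : ℕ} {k A : Type*} [CommSemiring k] [CommSemiring A]

lemma coeff_coeffMap {ρ : A → k} (hρ : ρ 0 = 0) (p : MvPolynomial (Fin n) A)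
    (m : Fin n →₀ ℕ) : coeff m (coeffMap ρ p) = ρ (coeff m p) := by
  classical
  simp only [coeffMap, coeff_sum, coeff_monomial, Finset.sum_ite_eq', mem_support_iff]
  split_ifs with h
  · rfl
  · rw [not_not.mp h, hρ]

lemma MvPolynomial.IsHomogeneous.coeffMap {ρ : A → k} (hρ : ρ 0 = 0)
    {p : MvPolynomial (Fin n) A} {d : ℕ} (hp : p.IsHomogeneous d) :
    (coeffMap ρ p).IsHomogeneous d := fun m hm =>
  hp fun h => hm (by rw [coeff_coeffMap hρ, h, hρ])

variable [Module k A]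

noncomputable def coeffMapₗ (ρ : A →ₗ[k] k) :
    MvPolynomial (Fin n) A →ₗ[k] MvPolynomial (Fin n) k where
  toFun := coeffMap ρ
  map_add' p q := by ext m; simp [coeff_coeffMap]
  map_smul' c p := by ext m; simp [coeff_coeffMap]

lemma coeffMapₗ_apply (ρ : A →ₗ[k] k) (p : MvPolynomial (Fin n) A) :
    coeffMapₗ ρ p = coeffMap ρ p := rfl

lemma semiconj_coeffMap_pderiv (ρ : A →ₗ[k] k) (i : Fin n) :
    Function.Semiconj (coeffMap (n := n) ρ) (pderiv i) (pderiv i) := fun p => by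
  ext m
  simp only [coeff_pderiv, coeff_coeffMap (map_zero ρ)]
  rw [← Nat.cast_succ, ← Nat.cast_succ, mul_comm, ← nsmul_eq_mul, map_nsmul, nsmul_eq_mul,
    mul_comm]

lemma semiconj_coeffMap_diffMonomial (ρ : A →ₗ[k] k) (c : Fin n →₀ ℕ) :
    Function.Semiconj (coeffMap ρ) (diffMonomial c) (diffMonomial c) := by
  unfold diffMonomial
  rw [List.ofFn_eq_map, List.ofFn_eq_map]
  induction List.finRange n with
  | nil => exact Function.Semiconj.id_right
  | cons i l ih =>
    simp only [List.map_cons, List.prod_cons, Module.End.coe_mul, Module.End.coe_pow]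
    exact ((semiconj_coeffMap_pderiv ρ i).iterate_right (c i)).comp_right ih

end CoeffMap

section GenericLinearForm

variable {n : ℕ} {R : Type*} [CommSemiring R]

noncomputable def genericLinearForm (e : Fin n → R) : MvPolynomial (Fin n) R :=
  ∑ i, C (e i) * X i

lemma isHomogeneous_genericLinearForm (e : Fin n → R) : (genericLinearForm e).IsHomogeneous 1 :=
  IsHomogeneous.sum _ _ _ fun i _ => isHomogeneous_C_mul_X (e i) i

lemma pderiv_genericLinearForm (e : Fin n → R) (i : Fin n) :
    pderiv i (genericLinearForm e) = C (e i) := by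
  classical
  simp [genericLinearForm, pderiv_X, Pi.single_apply]

lemma pderiv_pow_C_mul_genericLinearForm_pow (e : Fin n → R) (i : Fin n) (m : ℕ) (a : R)
    (t : ℕ) : ((pderiv i).toLinearMap ^ m) (C a * genericLinearForm e ^ t)
      = t.descFactorial m • (C (a * e i ^ m) * genericLinearForm e ^ (t - m)) := by
  induction m generalizing a t with
  | zero => simp
  | succ m ih =>
    have hstep : pderiv i (C a * genericLinearForm e ^ t)
        = t • (C (a * e i) * genericLinearForm e ^ (t - 1)) := by
      rw [pderiv_C_mul, Derivation.leibniz_pow, pderiv_genericLinearForm, C_mul]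
      simp only [smul_eq_mul, nsmul_eq_mul]
      ring
    rw [pow_succ, Module.End.mul_apply, Derivation.coeFn_coe, hstep, map_nsmul, ih,
      smul_smul, mul_assoc, ← pow_succ', Nat.sub_sub, add_comm 1 m]
    cases t with
    | zero => simp
    | succ t => rw [Nat.succ_descFactorial_succ, Nat.add_sub_cancel]

lemma diffMonomial_C_mul_genericLinearForm_pow (e : Fin n → R) (c : Fin n →₀ ℕ) (a : R)
    (t : ℕ) : diffMonomial c (C a * genericLinearForm e ^ t)
      = t.descFactorial c.degree •
        (C (a * ∏ i, e i ^ c i) * genericLinearForm e ^ (t - c.degree)) := by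
  suffices ∀ (l : List (Fin n)) (a : R) (t : ℕ),
      (l.map fun i => (pderiv i).toLinearMap ^ c i).prod (C a * genericLinearForm e ^ t)
        = t.descFactorial (l.map c).sum •
          (C (a * (l.map fun i => e i ^ c i).prod) * genericLinearForm e ^ (t - (l.map c).sum)) by
    rw [diffMonomial, List.ofFn_eq_map, this, ← List.ofFn_eq_map, ← List.ofFn_eq_map,
      List.sum_ofFn, List.prod_ofFn, Finsupp.degree_eq_sum]
  intro l
  induction l with
  | nil => simp
  | cons i l ih =>
    intro a t
    simp only [List.map_cons, List.prod_cons, List.sum_cons, Module.End.mul_apply]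
    rw [ih, map_nsmul, pderiv_pow_C_mul_genericLinearForm_pow, smul_smul, Nat.sub_sub,
      add_comm (l.map c).sum]
    congr 1
    · rw [mul_comm, ← Nat.descFactorial_mul_descFactorial (Nat.le_add_left _ (c i)),
        Nat.add_sub_cancel]
    · congr 2
      ring

lemma isHomogeneous_coeffMap_genericLinearForm_pow {k : Type*} [CommSemiring k] [Module k R]
    (ρ : R →ₗ[k] k) (e : Fin n → R) (s : ℕ) :
    (coeffMap ρ (genericLinearForm e ^ s)).IsHomogeneous s := by
  simpa using ((isHomogeneous_genericLinearForm e).pow s).coeffMap (map_zero ρ)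

end GenericLinearForm

section DiffOp

variable {n : ℕ} {k : Type*} [CommSemiring k]

lemma diffOp_eq_sum_of_support_subset {f : MvPolynomial (Fin n) k} {s : Finset (Fin n →₀ ℕ)}
    (hs : f.support ⊆ s) (g : MvPolynomial (Fin n) k) :
    diffOp f g = ∑ c ∈ s, coeff c f • diffMonomial c g :=
  Finset.sum_subset hs fun c _ hc => by rw [notMem_support_iff.mp hc, zero_smul]

lemma diffOp_add (f₁ f₂ g : MvPolynomial (Fin n) k) :
    diffOp (f₁ + f₂) g = diffOp f₁ g + diffOp f₂ g := by
  classical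
  rw [diffOp_eq_sum_of_support_subset support_add,
    diffOp_eq_sum_of_support_subset Finset.subset_union_left,
    diffOp_eq_sum_of_support_subset Finset.subset_union_right, ← Finset.sum_add_distrib]
  simp only [coeff_add, add_smul]

lemma diffOp_sum {ι : Type*} (s : Finset ι) (f : ι → MvPolynomial (Fin n) k)
    (g : MvPolynomial (Fin n) k) : diffOp (∑ i ∈ s, f i) g = ∑ i ∈ s, diffOp (f i) g := by
  induction s using Finset.cons_induction with
  | empty => simp [diffOp]
  | cons i s hi ih => rw [Finset.sum_cons, Finset.sum_cons, diffOp_add, ih]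

variable {A : Type*} [CommSemiring A]

lemma coeff_coeffMap_C_mul_genericLinearForm_pow [Module k A] (ρ : A →ₗ[k] k) (e : Fin n → A)
    (a : A) (s : ℕ) (m : Fin n →₀ ℕ) :
    coeff m (coeffMap ρ (C a * genericLinearForm e ^ s))
      = if m.degree = s then m.multinomial • ρ (a * ∏ i, e i ^ m i) else 0 := by
  have hL : genericLinearForm e = ∑ i, e i • X i := by simp only [genericLinearForm, C_mul']
  rw [coeff_coeffMap (map_zero ρ), coeff_C_mul, hL, coeff_linearCombination_X_pow_of_fintype,
    Finsupp.prod_fintype _ _ fun _ => pow_zero _, show (m.sum fun _ j => j) = m.degree from rfl]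
  split_ifs with h
  · rw [mul_left_comm, ← nsmul_eq_mul, map_nsmul]
  · rw [mul_zero, map_zero]

variable [Algebra k A]

lemma diffOp_coeffMap_genericLinearForm_pow (ρ : A →ₗ[k] k) (e : Fin n → A)
    {f : MvPolynomial (Fin n) k} {d : ℕ} (hf : f.IsHomogeneous d) (s : ℕ) :
    diffOp f (coeffMap ρ (genericLinearForm e ^ s))
      = s.descFactorial d • coeffMap ρ (C (aeval e f) * genericLinearForm e ^ (s - d)) := by
  have hdeg : ∀ c ∈ f.support, c.degree = d := fun c hc => by
    rw [Finsupp.degree_eq_weight_one]; exact hf (mem_support_iff.mp hc)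
  rw [aeval_def, eval₂_eq', map_sum, Finset.sum_mul,
    ← coeffMapₗ_apply ρ (∑ c ∈ f.support, _), map_sum, Finset.smul_sum, diffOp]
  refine Finset.sum_congr rfl fun c hc => ?_
  rw [← one_mul (genericLinearForm e ^ s), ← C_1, ← (semiconj_coeffMap_diffMonomial ρ c).eq,
    diffMonomial_C_mul_genericLinearForm_pow, hdeg c hc, one_mul, ← coeffMapₗ_apply,
    ← map_smul, ← map_nsmul, C_mul, mul_assoc, ← MvPolynomial.algebraMap_apply,
    ← Algebra.smul_def, smul_comm]

lemma diffOp_coeffMap_genericLinearForm_pow_eq_sum (ρ : A →ₗ[k] k) (e : Fin n → A)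
    (f : MvPolynomial (Fin n) k) (s : ℕ) :
    diffOp f (coeffMap ρ (genericLinearForm e ^ s))
      = ∑ d ∈ Finset.range (f.totalDegree + 1), s.descFactorial d •
          coeffMap ρ (C (aeval e (homogeneousComponent d f)) * genericLinearForm e ^ (s - d)) := by
  conv_lhs => rw [← sum_homogeneousComponent f]
  rw [diffOp_sum]
  exact Finset.sum_congr rfl fun d _ =>
    diffOp_coeffMap_genericLinearForm_pow ρ e (homogeneousComponent_isHomogeneous d f) s

lemma coeff_diffOp_coeffMap_genericLinearForm_pow (ρ : A →ₗ[k] k) (e : Fin n → A)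
    (f : MvPolynomial (Fin n) k) {s : ℕ} {m : Fin n →₀ ℕ} (hm : m.degree ≤ s) :
    coeff m (diffOp f (coeffMap ρ (genericLinearForm e ^ s)))
      = (s.descFactorial (s - m.degree) * m.multinomial) •
          ρ (aeval e (homogeneousComponent (s - m.degree) f * monomial m 1)) := by
  have hmono : aeval e (monomial m (1 : k)) = ∏ i, e i ^ m i := by
    rw [aeval_monomial, map_one, one_mul, Finsupp.prod_fintype _ _ fun _ => pow_zero _]
  rw [diffOp_coeffMap_genericLinearForm_pow_eq_sum, coeff_sum, map_mul, hmono]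
  simp only [coeff_smul, coeff_coeffMap_C_mul_genericLinearForm_pow]
  rw [Finset.sum_eq_single (s - m.degree)]
  · rw [if_pos (by omega), smul_smul]
  · intro d _ hd
    rcases le_or_gt d s with hds | hsd
    · rw [if_neg (by omega), smul_zero]
    · rw [Nat.descFactorial_eq_zero_iff_lt.mpr hsd, zero_smul]
  · intro hd
    rw [homogeneousComponent_eq_zero _ _ (by rw [Finset.mem_range] at hd; omega), map_zero,
      zero_mul, map_zero, smul_zero, ite_self, smul_zero]

lemma diffOp_coeffMap_genericLinearForm_pow_eq_zero (ρ : A →ₗ[k] k) (e : Fin n → A)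
    {f : MvPolynomial (Fin n) k} {s : ℕ} (hf : ∀ d, aeval e (homogeneousComponent d f) = 0) :
    diffOp f (coeffMap ρ (genericLinearForm e ^ s)) = 0 := by
  rw [diffOp_coeffMap_genericLinearForm_pow_eq_sum]
  refine Finset.sum_eq_zero fun d _ => ?_
  rw [hf, C_0, zero_mul, ← coeffMapₗ_apply, map_zero, smul_zero]

end DiffOp

lemma eq_zero_of_diffOp_coeffMap_genericLinearForm_pow_eq_zero {n : ℕ} {k A : Type*}
    [CommSemiring k] [NoZeroDivisors k] [CharZero k] [CommSemiring A] [Algebra k A]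
    (ρ : A →ₗ[k] k) (e : Fin n → A) {f : MvPolynomial (Fin n) k} {s : ℕ}
    (hf : diffOp f (coeffMap ρ (genericLinearForm e ^ s)) = 0)
    {m : Fin n →₀ ℕ} (hm : m.degree ≤ s) :
    ρ (aeval e (homogeneousComponent (s - m.degree) f * monomial m 1)) = 0 := by
  have hcoeff := congrArg (coeff m) hf
  rw [coeff_diffOp_coeffMap_genericLinearForm_pow ρ e f hm, coeff_zero, nsmul_eq_mul,
    mul_eq_zero] at hcoeff
  refine hcoeff.resolve_left (Nat.cast_ne_zero.mpr (mul_ne_zero ?_ ?_))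
  · exact fun h => absurd (Nat.descFactorial_eq_zero_iff_lt.mp h) (by omega)
  · exact (Nat.multinomial_pos _ _).ne'

lemma map_aeval_mul_eq_zero_of_forall_monomial {σ k A : Type*} [CommSemiring k]
    [CommSemiring A] [Algebra k A] (ρ : A →ₗ[k] k) (e : σ → A) {q : MvPolynomial σ k}
    (hq : ∀ m, ρ (aeval e (q * monomial m 1)) = 0) (g : MvPolynomial σ k) :
    ρ (aeval e q * aeval e g) = 0 := by
  rw [← map_mul, ← support_sum_monomial_coeff g, Finset.mul_sum, map_sum, map_sum]
  refine Finset.sum_eq_zero fun m _ => ?_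
  rw [show monomial m (coeff m g) = coeff m g • monomial m (1 : k) by
      rw [smul_monomial, smul_eq_mul, mul_one],
    mul_smul_comm, map_smul, map_smul, hq, smul_zero]

section IdealOfVars

variable {σ R : Type*}

lemma MvPolynomial.IsHomogeneous.mem_pow_idealOfVars [CommSemiring R]
    {p : MvPolynomial σ R} {d : ℕ} (hp : p.IsHomogeneous d) : p ∈ idealOfVars σ R ^ d :=
  (mem_pow_idealOfVars_iff d p).mpr fun x hx => by
    rw [Finsupp.degree_eq_weight_one]; exact (hp (mem_support_iff.mp hx)).ge

lemma MvPolynomial.IsHomogeneous.map_mem_map_idealOfVars_pow [CommSemiring R] {S : Type*}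
    [CommSemiring S] (φ : MvPolynomial σ R →+* S) {p : MvPolynomial σ R} {d : ℕ}
    (hp : p.IsHomogeneous d) : φ p ∈ Ideal.map φ (idealOfVars σ R) ^ d := by
  rw [← Ideal.map_pow]
  exact Ideal.mem_map_of_mem φ hp.mem_pow_idealOfVars

lemma sub_C_coeff_zero_mem_idealOfVars [CommRing R] (p : MvPolynomial σ R) :
    p - C (coeff 0 p) ∈ idealOfVars σ R := by
  rw [← Submodule.pow_one (idealOfVars σ R), mem_pow_idealOfVars_iff']
  intro x hx
  rw [Nat.lt_one_iff, Finsupp.degree_eq_zero_iff] at hx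
  simp [hx]

variable [CommRing R] {J : Ideal (MvPolynomial σ R)}

lemma aeval_mk_X (p : MvPolynomial σ R) :
    aeval (fun i => Ideal.Quotient.mk J (X i)) p = Ideal.Quotient.mk J p :=
  (DFunLike.congr_fun (aeval_unique (Ideal.Quotient.mkₐ R J)) p).symm

lemma exists_sub_algebraMap_mem_map_idealOfVars (a : MvPolynomial σ R ⧸ J) :
    ∃ c : R, a - algebraMap R _ c ∈ Ideal.map (Ideal.Quotient.mk J) (idealOfVars σ R) := by
  obtain ⟨p, rfl⟩ := Ideal.Quotient.mk_surjective a
  exact ⟨coeff 0 p, Ideal.mem_map_of_mem _ (sub_C_coeff_zero_mem_idealOfVars p)⟩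

end IdealOfVars

section Socle

variable {k A : Type*} [Field k] [CommRing A] [Algebra k A] {M : Ideal A}

lemma mem_socle_iff {x : A} : x ∈ socle k M ↔ x ∈ M ∧ ∀ y ∈ M, y * x = 0 := by
  simp [socle]

lemma ne_bot_of_finrank_socle_eq_one (h : Module.finrank k (socle k M) = 1) : M ≠ ⊥ := by
  rintro rfl
  have hsoc : socle k (⊥ : Ideal A) = ⊥ :=
    eq_bot_iff.mpr fun x hx => by simpa using (mem_socle_iff.mp hx).1
  rw [hsoc, finrank_bot] at h
  exact zero_ne_one h

lemma mem_socle_of_mem_pow (hM : M ≠ ⊥) {η : ℕ} (h : M ^ (η + 1) = ⊥) {x : A}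
    (hx : x ∈ M ^ η) : x ∈ socle k M := by
  have hη : η ≠ 0 := by
    rintro rfl
    exact hM (by rwa [zero_add, Submodule.pow_one] at h)
  refine mem_socle_iff.mpr ⟨Ideal.pow_le_self hη hx, fun y hy => ?_⟩
  have hyx := Ideal.mul_mem_mul hy hx
  rwa [← pow_succ', h, Ideal.mem_bot] at hyx

lemma eq_zero_of_forall_map_mul_eq_zero (hM : ∀ a : A, ∃ c : k, a - algebraMap k A c ∈ M)
    {N : ℕ} (hN : M ^ N = ⊥) (hsoc : Module.finrank k (socle k M) = 1) (ρ : A →ₗ[k] k)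
    {z : A} (hz : z ∈ socle k M) (hρz : ρ z ≠ 0) {a : A} (ha : ∀ b, ρ (a * b) = 0) :
    a = 0 := by
  have hz0 : z ≠ 0 := by rintro rfl; exact hρz (map_zero ρ)
  have hkill : ∀ x : A, (∀ b, ρ (x * b) = 0) → (∀ y ∈ M, x * y = 0) → x = 0 := by
    intro x hx hxM
    obtain ⟨c, hc⟩ := hM x
    -- `x ∈ M`, since its scalar part `c` satisfies `c • z = x * z = 0`
    have hcz : c • z = 0 :=
      calc c • z = x * z - (x - algebraMap k A c) * z := by rw [Algebra.smul_def]; ring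
      _ = 0 := by rw [hxM z (mem_socle_iff.mp hz).1, (mem_socle_iff.mp hz).2 _ hc, sub_zero]
    have hxsoc : x ∈ socle k M := by
      refine mem_socle_iff.mpr ⟨?_, fun y hy => by rw [mul_comm]; exact hxM y hy⟩
      simpa [(smul_eq_zero.mp hcz).resolve_right hz0] using hc
    obtain ⟨μ, hμ⟩ := (finrank_eq_one_iff_of_nonzero' (⟨z, hz⟩ : socle k M)
      (by simpa using hz0)).mp hsoc ⟨x, hxsoc⟩
    have hμx : μ • z = x := congrArg Subtype.val hμ
    have hμ0 : μ * ρ z = 0 := by rw [← smul_eq_mul, ← map_smul, hμx, ← mul_one x, hx 1]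
    rw [← hμx, (mul_eq_zero.mp hμ0).resolve_right hρz, zero_smul]
  have hdesc : ∀ t, ∀ b ∈ M ^ (N - t), a * b = 0 := by
    intro t
    induction t with
    | zero => simp [hN]
    | succ t ih =>
      intro b hb
      refine hkill (a * b) (fun c => by rw [mul_assoc]; exact ha _) fun y hy => ?_
      rw [mul_assoc]
      refine ih _ (Ideal.pow_le_pow_right (by omega : N - t ≤ N - (t + 1) + 1) ?_)
      rw [pow_succ]
      exact Ideal.mul_mem_mul hb hy
  simpa using hdesc N 1 (by simp)

end Socle

section GradedQuotient

variable {k : Type*} [Field k] {n : ℕ} {J : Ideal (MvPolynomial (Fin n) k)} {η : ℕ}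

lemma mk_eq_zero_of_isHomogeneous
    (hη : Ideal.map (Ideal.Quotient.mk J) (idealOfVars (Fin n) k) ^ (η + 1) = ⊥)
    {p : MvPolynomial (Fin n) k} {d : ℕ} (hp : p.IsHomogeneous d) (hd : η < d) :
    Ideal.Quotient.mk J p = 0 := by
  simpa [hη] using Ideal.pow_le_pow_right hd (hp.map_mem_map_idealOfVars_pow (Ideal.Quotient.mk J))

lemma map_mk_homogeneousComponent_mul_monomial_eq_zero [CharZero k]
    (hη : Ideal.map (Ideal.Quotient.mk J) (idealOfVars (Fin n) k) ^ (η + 1) = ⊥)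
    {ρ : (MvPolynomial (Fin n) k ⧸ J) →ₗ[k] k}
    (hρlow : ∀ j < η, ∀ p : MvPolynomial (Fin n) k, p.IsHomogeneous j →
      ρ (Ideal.Quotient.mk J p) = 0)
    {f : MvPolynomial (Fin n) k}
    (hf : diffOp f (coeffMap ρ
      (genericLinearForm (fun i => Ideal.Quotient.mk J (X i)) ^ η)) = 0)
    (j : ℕ) (m : Fin n →₀ ℕ) :
    ρ (Ideal.Quotient.mk J (homogeneousComponent j f * monomial m 1)) = 0 := by
  have hjm : (homogeneousComponent j f * monomial m 1).IsHomogeneous (j + m.degree) :=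
    (homogeneousComponent_isHomogeneous j f).mul (isHomogeneous_monomial 1 rfl)
  rcases lt_trichotomy (j + m.degree) η with hlt | heq | hgt
  · exact hρlow _ hlt _ hjm
  · have hρm := eq_zero_of_diffOp_coeffMap_genericLinearForm_pow_eq_zero ρ _ hf
      (m := m) (by omega)
    rwa [show η - m.degree = j by omega, aeval_mk_X] at hρm
  · rw [mk_eq_zero_of_isHomogeneous hη hjm hgt, map_zero]

end GradedQuotient

theorem homogeneous_inverse_system_general
    {k : Type*} [Field k] [CharZero k] (n : ℕ)
    (J : Ideal (MvPolynomial (Fin n) k))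
    (hJhom : ∀ f ∈ J, ∀ d : ℕ, homogeneousComponent d f ∈ J)
    (hGor : Module.finrank k
      (socle k (Ideal.map (Ideal.Quotient.mk J) (Ideal.span (Set.range X)))) = 1)
    (η : ℕ)
    (hη₂ : (Ideal.map (Ideal.Quotient.mk J) (Ideal.span (Set.range X))) ^ (η + 1) = ⊥)
    (ρ : (MvPolynomial (Fin n) k ⧸ J) →ₗ[k] k)
    (hρlow : ∀ j < η, ∀ p : MvPolynomial (Fin n) k, p.IsHomogeneous j →
      ρ (Ideal.Quotient.mk J p) = 0)
    (hρtop : ∃ p : MvPolynomial (Fin n) k, p.IsHomogeneous η ∧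
      ρ (Ideal.Quotient.mk J p) ≠ 0) :
    (coeffMap (fun a => ρ a)
        ((∑ i, MvPolynomial.C (Ideal.Quotient.mk J (X i)) * X i) ^ η)).IsHomogeneous η ∧
    ∀ f : MvPolynomial (Fin n) k,
      diffOp f (coeffMap (fun a => ρ a)
        ((∑ i, MvPolynomial.C (Ideal.Quotient.mk J (X i)) * X i) ^ η)) = 0 ↔ f ∈ J := by
  set e := fun i => Ideal.Quotient.mk J (X i)
  change (coeffMap ρ (genericLinearForm e ^ η)).IsHomogeneous η ∧
    ∀ f, diffOp f (coeffMap ρ (genericLinearForm e ^ η)) = 0 ↔ f ∈ J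
  obtain ⟨z, hz, hρz⟩ := hρtop
  have hzsoc := mem_socle_of_mem_pow (k := k) (ne_bot_of_finrank_socle_eq_one hGor) hη₂
    (hz.map_mem_map_idealOfVars_pow (Ideal.Quotient.mk J))
  refine ⟨isHomogeneous_coeffMap_genericLinearForm_pow ρ e η,
    fun f => ⟨fun hf => ?_, fun hf => ?_⟩⟩
  · rw [← sum_homogeneousComponent f]
    refine Ideal.sum_mem _ fun j _ => Ideal.Quotient.eq_zero_iff_mem.mp ?_
    refine eq_zero_of_forall_map_mul_eq_zero exists_sub_algebraMap_mem_map_idealOfVars hη₂ hGor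
      ρ hzsoc hρz fun b => ?_
    obtain ⟨g, rfl⟩ := Ideal.Quotient.mk_surjective b
    rw [← aeval_mk_X, ← aeval_mk_X]
    refine map_aeval_mul_eq_zero_of_forall_monomial ρ e (fun m => ?_) g
    rw [aeval_mk_X]
    exact map_mk_homogeneousComponent_mul_monomial_eq_zero hη₂ hρlow hf j m
  · refine diffOp_coeffMap_genericLinearForm_pow_eq_zero ρ e fun d => ?_
    rw [aeval_mk_X, Ideal.Quotient.eq_zero_iff_mem]
    exact hJhom f hf d

/-- Let `k` be a field of characteristic zero and `A = k[x_1,…,x_n]/J`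
an Artinian Gorenstein graded quotient by a homogeneous ideal `J ⊆ (x_1,…,x_n)` with socle
degree `η`. Let `ρ : A → k` be a linear form vanishing on the graded components of degree
`< η` and nonzero in degree `η`. Then `S = ρ((x_1 e_1 + ⋯ + x_n e_n)^η)` is a homogeneous
polynomial of degree `η` which is a Macaulay inverse system for `A`: `Ann(S) = J`. -/
theorem homogeneous_inverse_system
    {k : Type*} [Field k] [CharZero k] (n : ℕ)
    (J : Ideal (MvPolynomial (Fin n) k))
    (hJ : J ≤ Ideal.span (Set.range X))
    (hJhom : ∀ f ∈ J, ∀ d : ℕ, homogeneousComponent d f ∈ J)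
    (hArtinian : FiniteDimensional k (MvPolynomial (Fin n) k ⧸ J))
    (hGor : Module.finrank k
      (socle k (Ideal.map (Ideal.Quotient.mk J) (Ideal.span (Set.range X)))) = 1)
    (η : ℕ)
    (hη₁ : (Ideal.map (Ideal.Quotient.mk J) (Ideal.span (Set.range X))) ^ η ≠ ⊥)
    (hη₂ : (Ideal.map (Ideal.Quotient.mk J) (Ideal.span (Set.range X))) ^ (η + 1) = ⊥)
    (ρ : (MvPolynomial (Fin n) k ⧸ J) →ₗ[k] k)
    (hρlow : ∀ j < η, ∀ p : MvPolynomial (Fin n) k, p.IsHomogeneous j →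
      ρ (Ideal.Quotient.mk J p) = 0)
    (hρtop : ∃ p : MvPolynomial (Fin n) k, p.IsHomogeneous η ∧
      ρ (Ideal.Quotient.mk J p) ≠ 0) :
    (coeffMap (fun a => ρ a)
        ((∑ i, MvPolynomial.C (Ideal.Quotient.mk J (X i)) * X i) ^ η)).IsHomogeneous η ∧
    ∀ f : MvPolynomial (Fin n) k,
      diffOp f (coeffMap (fun a => ρ a)
        ((∑ i, MvPolynomial.C (Ideal.Quotient.mk J (X i)) * X i) ^ η)) = 0 ↔ f ∈ J :=
  homogeneous_inverse_system_general n J hJhom hGor η hη₂ ρ hρlow hρtop
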